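/- Let α>0, let τ be an exponentially distributed random variable with parameter α, set S_t = e^{t∧τ}, and fix 0<λ<1. Define Ẑ⁰_t = (1/(αλ))^{1_{{τ≤t}}}·exp((α - 1/λ)(t∧τ)) and Ẑ¹_t = ((1-λ)/(αλ))^{1_{{τ≤t}}}·exp((1 + α - 1/λ)(t∧τ)). Then Ẑ⁰ and Ẑ¹ are strictly positive uniformly integrable P-martingales with respect to the P-augmented natural filtration of S, Ẑ⁰_0 = 1, and Ẑ¹_t/Ẑ⁰_t = (1-λ)^{1_{{τ≤t}}}·e^{t∧τ} ∈ [(1-λ)S_t, S_t] for all t ≥ 0; hence (Ẑ⁰,Ẑ¹) is a λ-consistent price system for S. -/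

import Mathlib

open MeasureTheory Filter Set
open scoped ENNReal NNReal Topology

noncomputable section

namespace CSY

variable {Ω : Type*} [MeasurableSpace Ω]

/-- A process is adapted to the family of σ-algebras `F` on the time set `I`. -/
def AdaptedOn (F : ℝ → MeasurableSpace Ω) (I : Set ℝ) (f : ℝ → Ω → ℝ) : Prop :=
  ∀ t ∈ I, Measurable[F t] (f t)

/-- Martingale on the time set `I` with respect to the σ-algebra family `F`. -/
def MartOn (F : ℝ → MeasurableSpace Ω) (P : Measure Ω) (I : Set ℝ) (f : ℝ → Ω → ℝ) : Prop :=
  AdaptedOn F I f ∧ (∀ t ∈ I, Integrable (f t) P) ∧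
    ∀ s ∈ I, ∀ t ∈ I, s ≤ t → P[f t|F s] =ᵐ[P] f s

/-- Supermartingale on the time set `I`. -/
def SupermartOn (F : ℝ → MeasurableSpace Ω) (P : Measure Ω) (I : Set ℝ) (f : ℝ → Ω → ℝ) : Prop :=
  AdaptedOn F I f ∧ (∀ t ∈ I, Integrable (f t) P) ∧
    ∀ s ∈ I, ∀ t ∈ I, s ≤ t → P[f t|F s] ≤ᵐ[P] f s

/-- Stopping time (real-valued) with respect to `F`. -/
def IsStopT (F : ℝ → MeasurableSpace Ω) (τ : Ω → ℝ) : Prop :=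
  ∀ t : ℝ, MeasurableSet[F t] {ω | τ ω ≤ t}

/-- Stopping time with values in the extended reals. -/
def IsStopTE (F : ℝ → MeasurableSpace Ω) (τ : Ω → EReal) : Prop :=
  ∀ t : ℝ, MeasurableSet[F t] {ω | τ ω ≤ (t : EReal)}

/-- Stopped process. -/
def stopProc (f : ℝ → Ω → ℝ) (τ : Ω → ℝ) : ℝ → Ω → ℝ := fun t ω => f (min t (τ ω)) ω

/-- A localizing sequence of stopping times: increasing to `+∞`. -/
def IsLocSeq (F : ℝ → MeasurableSpace Ω) (σ : ℕ → Ω → ℝ) : Prop :=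
  (∀ n, IsStopT F (σ n)) ∧ (∀ ω, Monotone fun n => σ n ω) ∧
    ∀ ω, Tendsto (fun n => σ n ω) atTop atTop

/-- Local martingale on the time set `I`. -/
def LocMartOn (F : ℝ → MeasurableSpace Ω) (P : Measure Ω) (I : Set ℝ) (f : ℝ → Ω → ℝ) : Prop :=
  ∃ σ : ℕ → Ω → ℝ, IsLocSeq F σ ∧ ∀ n, MartOn F P I (stopProc f (σ n))

/-- Uniform integrability of the family `(f t)_{t ∈ I}`. -/
def UIFamilyOn (P : Measure Ω) (I : Set ℝ) (f : ℝ → Ω → ℝ) : Prop :=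
  ∀ ε > (0 : ℝ), ∃ C : ℝ, ∀ t ∈ I, ∫ ω in {ω | C ≤ |f t ω|}, |f t ω| ∂P ≤ ε

/-- Càdlàg (right-continuous with finite left limits) path on the time set `I`. -/
def Cadlag (I : Set ℝ) (g : ℝ → ℝ) : Prop :=
  (∀ t ∈ I, ContinuousWithinAt g (I ∩ Ici t) t) ∧
    ∀ t ∈ I, ∃ l : ℝ, Tendsto g (nhdsWithin t (I ∩ Iio t)) (nhds l)

/-- The (Lebesgue–)Stieltjes measure associated to a nondecreasing right-continuous function,
used for pathwise Riemann–Stieltjes integrals. -/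
def rsMeasure (g : ℝ → ℝ) : Measure ℝ := by
  classical
  exact if h : Monotone g ∧ ∀ x, ContinuousWithinAt g (Ici x) x then
    StieltjesFunction.measure ⟨g, h.1, h.2⟩
  else 0

/-- Liquidation value of a position `(φ0, φ1)` under proportional transaction costs `lam`. -/
def Vliq (S : ℝ → Ω → ℝ) (lam : ℝ) (φ0 φ1 : ℝ → Ω → ℝ) (t : ℝ) (ω : Ω) : ℝ :=
  φ0 t ω + max (φ1 t ω) 0 * ((1 - lam) * S t ω) - max (-φ1 t ω) 0 * S t ω

/-- A self-financing trading strategy under proportional transaction costs `lam` for the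
price process `S`, on the time set `I`, starting from the initial endowment
`(φ0_{0-}, φ1_{0-}) = (a, b)`.  The holdings are optional (adapted and càdlàg) finite
variation processes, `up`/`dn` are the components of the Jordan–Hahn decomposition of `φ1`,
and the self-financing condition is expressed via pathwise Riemann–Stieltjes integrals. -/
structure Strategy (F : ℝ → MeasurableSpace Ω) (I : Set ℝ) (S : ℝ → Ω → ℝ)
    (lam a b : ℝ) where
  φ0 : ℝ → Ω → ℝ
  φ1 : ℝ → Ω → ℝ
  up : ℝ → Ω → ℝ
  dn : ℝ → Ω → ℝ
  adapted0 : AdaptedOn F I φ0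
  adapted1 : AdaptedOn F I φ1
  cadlag0 : ∀ ω, Cadlag I fun t => φ0 t ω
  cadlag1 : ∀ ω, Cadlag I fun t => φ1 t ω
  fv0 : ∀ ω, ∃ u d : ℝ → ℝ, Monotone u ∧ Monotone d ∧ ∀ t ∈ I, φ0 t ω = u t - d t
  up_mono : ∀ ω, Monotone fun t => up t ω
  dn_mono : ∀ ω, Monotone fun t => dn t ω
  up_rc : ∀ ω x, ContinuousWithinAt (fun t => up t ω) (Ici x) x
  dn_rc : ∀ ω x, ContinuousWithinAt (fun t => dn t ω) (Ici x) x
  jordan : ∀ ω, ∀ t ∈ I, φ1 t ω = b + up t ω - dn t ω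
  init : ∀ ω, φ0 0 ω - a ≤
    -(S 0 ω * max (φ1 0 ω - b) 0) + (1 - lam) * S 0 ω * max (-(φ1 0 ω - b)) 0
  selfFin : ∀ ω, ∀ s ∈ I, ∀ t ∈ I, s ≤ t →
    φ0 t ω - φ0 s ω ≤
      -(∫ u in Ioc s t, S u ω ∂(rsMeasure fun r => up r ω)) +
        (1 - lam) * ∫ u in Ioc s t, S u ω ∂(rsMeasure fun r => dn r ω)

/-- Admissibility: the liquidation value stays nonnegative. -/
def Strategy.Admissible {F : ℝ → MeasurableSpace Ω} {I : Set ℝ} {S : ℝ → Ω → ℝ}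
    {lam a b : ℝ} (str : Strategy F I S lam a b) : Prop :=
  ∀ ω, ∀ t ∈ I, 0 ≤ Vliq S lam str.φ0 str.φ1 t ω

/-- The set `C(x)` of attainable claims at time `T`. -/
def Cset (F : ℝ → MeasurableSpace Ω) (I : Set ℝ) (S : ℝ → Ω → ℝ) (lam x T : ℝ) :
    Set (Ω → ℝ) :=
  {g | ∃ str : Strategy F I S lam x 0, str.Admissible ∧
    g = fun ω => Vliq S lam str.φ0 str.φ1 T ω}

/-- A `mu`-consistent price system for the price process `S` with bid-ask spread
`[(1-mu)S, S]`. -/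
structure IsCPS (F : ℝ → MeasurableSpace Ω) (P : Measure Ω) (I : Set ℝ) (S : ℝ → Ω → ℝ)
    (mu : ℝ) (Z0 Z1 : ℝ → Ω → ℝ) : Prop where
  pos0 : ∀ t ∈ I, ∀ᵐ ω ∂P, 0 < Z0 t ω
  pos1 : ∀ t ∈ I, ∀ᵐ ω ∂P, 0 < Z1 t ω
  init : ∀ᵐ ω ∂P, Z0 0 ω = 1
  mart0 : MartOn F P I Z0
  locmart1 : LocMartOn F P I Z1
  bidask : ∀ t ∈ I, ∀ᵐ ω ∂P,
    (1 - mu) * S t ω ≤ Z1 t ω / Z0 t ω ∧ Z1 t ω / Z0 t ω ≤ S t ω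

/-- Weak (nonnegative) version of a consistent price system, with the bid-ask condition in
multiplicative form (so that `0/0` causes no harm). -/
structure IsCPSw (F : ℝ → MeasurableSpace Ω) (P : Measure Ω) (I : Set ℝ) (S : ℝ → Ω → ℝ)
    (mu : ℝ) (Z0 Z1 : ℝ → Ω → ℝ) : Prop where
  nonneg0 : ∀ t ∈ I, ∀ᵐ ω ∂P, 0 ≤ Z0 t ω
  nonneg1 : ∀ t ∈ I, ∀ᵐ ω ∂P, 0 ≤ Z1 t ω
  init : ∀ᵐ ω ∂P, Z0 0 ω = 1
  mart0 : MartOn F P I Z0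
  locmart1 : LocMartOn F P I Z1
  bidask : ∀ t ∈ I, ∀ᵐ ω ∂P,
    (1 - mu) * S t ω * Z0 t ω ≤ Z1 t ω ∧ Z1 t ω ≤ S t ω * Z0 t ω

/-- `Z = (Z0, Z1)` is a `lam`-consistent local martingale deflator (strict version):
there is a localizing sequence `σ` such that each stopped process is a `lam`-consistent
price system for the stopped price process. -/
def IsLocMartDeflator (F : ℝ → MeasurableSpace Ω) (P : Measure Ω) (I : Set ℝ)
    (S : ℝ → Ω → ℝ) (lam : ℝ) (Z0 Z1 : ℝ → Ω → ℝ) : Prop :=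
  ∃ σ : ℕ → Ω → ℝ, IsLocSeq F σ ∧
    ∀ n, IsCPS F P I (stopProc S (σ n)) lam (stopProc Z0 (σ n)) (stopProc Z1 (σ n))

/-- Nonnegative version of a `lam`-consistent local martingale deflator. -/
def IsLocMartDeflatorW (F : ℝ → MeasurableSpace Ω) (P : Measure Ω) (I : Set ℝ)
    (S : ℝ → Ω → ℝ) (lam : ℝ) (Z0 Z1 : ℝ → Ω → ℝ) : Prop :=
  ∃ σ : ℕ → Ω → ℝ, IsLocSeq F σ ∧
    ∀ n, IsCPSw F P I (stopProc S (σ n)) lam (stopProc Z0 (σ n)) (stopProc Z1 (σ n))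

/-- `S` satisfies `(CPS^mu)` locally. -/
def CPSLocal (F : ℝ → MeasurableSpace Ω) (P : Measure Ω) (I : Set ℝ) (S : ℝ → Ω → ℝ)
    (mu : ℝ) : Prop :=
  ∃ Z0 Z1 : ℝ → Ω → ℝ, IsLocMartDeflator F P I S mu Z0 Z1

/-- A (nonnegative) `lam`-consistent supermartingale deflator `(Y0, Y1)` with `Y0_0 = y`. -/
structure IsDeflator (F : ℝ → MeasurableSpace Ω) (P : Measure Ω) (I : Set ℝ)
    (S : ℝ → Ω → ℝ) (lam y : ℝ) (Y0 Y1 : ℝ → Ω → ℝ) : Prop where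
  nonneg0 : ∀ t ∈ I, ∀ᵐ ω ∂P, 0 ≤ Y0 t ω
  nonneg1 : ∀ t ∈ I, ∀ᵐ ω ∂P, 0 ≤ Y1 t ω
  init : ∀ᵐ ω ∂P, Y0 0 ω = y
  bidask : ∀ t ∈ I, ∀ᵐ ω ∂P,
    (1 - lam) * S t ω * Y0 t ω ≤ Y1 t ω ∧ Y1 t ω ≤ S t ω * Y0 t ω
  supermart : ∀ str : Strategy F I S lam 1 0, str.Admissible →
    SupermartOn F P I fun t ω => str.φ0 t ω * Y0 t ω + str.φ1 t ω * Y1 t ω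

/-- The set `D(y)` of terminal values of supermartingale deflators. -/
def Dset (F : ℝ → MeasurableSpace Ω) (P : Measure Ω) (I : Set ℝ) (S : ℝ → Ω → ℝ)
    (lam T y : ℝ) : Set (Ω → ℝ) :=
  {h | ∃ Y0 Y1 : ℝ → Ω → ℝ, IsDeflator F P I S lam y Y0 Y1 ∧ h = Y0 T}

/-- Coefficients of forward convex combinations: `a n` is supported on `[n, N n]`,
nonnegative, and sums to one. -/
def FwdCC (a : ℕ → ℕ → ℝ) (N : ℕ → ℕ) : Prop :=
  (∀ n k, 0 ≤ a n k) ∧ (∀ n k, k < n ∨ N n < k → a n k = 0) ∧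
    ∀ n, ∑ k ∈ Finset.Icc n (N n), a n k = 1

/-- A utility function on `(0,∞)`: increasing, strictly concave, smooth, satisfying the
Inada conditions and reasonable asymptotic elasticity. -/
structure IsUtility (U : ℝ → ℝ) : Prop where
  mono : StrictMonoOn U (Ioi 0)
  concave : StrictConcaveOn ℝ (Ioi 0) U
  smooth : ContDiffOn ℝ (⊤ : ℕ∞) U (Ioi 0)
  inada0 : Tendsto (deriv U) (nhdsWithin 0 (Ioi 0)) atTop
  inadaInf : Tendsto (deriv U) atTop (nhds 0)
  rae : limsup (fun x => x * deriv U x / U x) atTop < 1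

/-- The convex conjugate `V(y) = sup_{x>0} (U(x) - x y)`. -/
def conjU (U : ℝ → ℝ) (y : ℝ) : ℝ := sSup {r | ∃ x : ℝ, 0 < x ∧ r = U x - x * y}

/-- Extended-real-valued expected utility `E[U(X)]`, with the convention that a claim that
is `≤ 0` on a set of positive measure has expected utility `-∞`. -/
def eExpU (P : Measure Ω) (U : ℝ → ℝ) (X : Ω → ℝ) : EReal :=
  ((∫⁻ ω, (if X ω ≤ 0 then 0 else ENNReal.ofReal (U (X ω))) ∂P : ℝ≥0∞) : EReal) -
    ((∫⁻ ω, (if X ω ≤ 0 then ⊤ else ENNReal.ofReal (-U (X ω))) ∂P : ℝ≥0∞) : EReal)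

/-- Extended-real-valued expected dual utility `E[V(Y)]` for the conjugate `V` of `U`. -/
def eExpV (P : Measure Ω) (U : ℝ → ℝ) (Y : Ω → ℝ) : EReal :=
  ((∫⁻ ω, (if Y ω ≤ 0 then ⊤ else ENNReal.ofReal (conjU U (Y ω))) ∂P : ℝ≥0∞) : EReal) -
    ((∫⁻ ω, (if Y ω ≤ 0 then 0 else ENNReal.ofReal (-conjU U (Y ω))) ∂P : ℝ≥0∞) : EReal)

/-- Primal value function `u(x)`. -/
def uE (F : ℝ → MeasurableSpace Ω) (P : Measure Ω) (I : Set ℝ) (S : ℝ → Ω → ℝ)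
    (lam T : ℝ) (U : ℝ → ℝ) (x : ℝ) : EReal :=
  sSup {r : EReal | ∃ g ∈ Cset F I S lam x T, r = eExpU P U g}

/-- Dual value function `v(y)`. -/
def vE (F : ℝ → MeasurableSpace Ω) (P : Measure Ω) (I : Set ℝ) (S : ℝ → Ω → ℝ)
    (lam T : ℝ) (U : ℝ → ℝ) (y : ℝ) : EReal :=
  sInf {r : EReal | ∃ h ∈ Dset F P I S lam T y, r = eExpV P U h}

/-- Standard Brownian motion starting at `0`: continuous paths, Gaussian increments,
independent increments. -/
structure IsStdBM (P : Measure Ω) (B : ℝ → Ω → ℝ) : Prop where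
  init : ∀ ω, B 0 ω = 0
  cont : ∀ ω, Continuous fun t => B t ω
  meas : ∀ t, Measurable (B t)
  law : ∀ s t : ℝ, 0 ≤ s → s ≤ t →
    Measure.map (fun ω => B t ω - B s ω) P = ProbabilityTheory.gaussianReal 0 ((t - s).toNNReal)
  indep : ∀ (n : ℕ) (t : ℕ → ℝ), Monotone t → (∀ i, 0 ≤ t i) →
    ProbabilityTheory.iIndepFun (m := fun _ : Fin n => inferInstance)
      (fun i : Fin n => fun ω => B (t ((i : ℕ) + 1)) ω - B (t (i : ℕ)) ω) P

/-- A filtration (family of σ-algebras) compatible with the Brownian motion `B`: it is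
monotone, `B` is adapted, and increments after `s` are independent of `F s`.  The
`P`-augmented natural filtration of `B` is an example. -/
structure IsBMFiltration (P : Measure Ω) (B : ℝ → Ω → ℝ) (F : ℝ → MeasurableSpace Ω) :
    Prop where
  mono : Monotone F
  le : ∀ t, F t ≤ (inferInstance : MeasurableSpace Ω)
  adapted : ∀ t, Measurable[F t] (B t)
  indep : ∀ s t : ℝ, 0 ≤ s → s ≤ t →
    ProbabilityTheory.Indep
      (MeasurableSpace.comap (fun ω => B t ω - B s ω) inferInstance) (F s) P

/-- `W^w_t = w + B_t - t`. -/
def Wdrift (B : ℝ → Ω → ℝ) (w t : ℝ) (ω : Ω) : ℝ := w + B t ω - t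

/-- First time `W^w` hits `(-∞, c]` (after time 0). -/
def hitTime (B : ℝ → Ω → ℝ) (w c : ℝ) (ω : Ω) : ℝ :=
  sInf {t : ℝ | 0 < t ∧ Wdrift B w t ω ≤ c}

/-- `τ^w`, the first time `W^w` hits `(-∞, 0]`. -/
def hitT (B : ℝ → Ω → ℝ) (w : ℝ) (ω : Ω) : ℝ := hitTime B w 0 ω

/-- The price process `S^w_t = e^{t ∧ τ^w}`. -/
def Sproc (B : ℝ → Ω → ℝ) (w : ℝ) : ℝ → Ω → ℝ :=
  fun t ω => Real.exp (min t (hitT B w ω))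

/-- The density of the inverse Gaussian law of the first passage time of `B_t - t`
at level `w` (the law of `τ^w`). -/
def igDensity (w t : ℝ) : ℝ :=
  if 0 < t then w / Real.sqrt (2 * Real.pi * t ^ 3) * Real.exp (-((t - w) ^ 2) / (2 * t))
  else 0

/-- The leverage process of a strategy. -/
def Lev (S : ℝ → Ω → ℝ) (φ0 φ1 : ℝ → Ω → ℝ) (t : ℝ) (ω : Ω) : ℝ :=
  φ1 t ω * S t ω / (φ0 t ω + φ1 t ω * S t ω)

/-- Value of the log-utility maximization problem for `S^w` under transaction costs `lam`,
over admissible strategies starting from the endowment `(a, b)`, with terminal time `τ^w`. -/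
def logVal (F : ℝ → MeasurableSpace Ω) (P : Measure Ω) (B : ℝ → Ω → ℝ)
    (lam w a b : ℝ) : EReal :=
  sSup {r : EReal | ∃ str : Strategy F (Ici 0) (Sproc B w) lam a b, str.Admissible ∧
    r = eExpU P Real.log fun ω => Vliq (Sproc B w) lam str.φ0 str.φ1 (hitT B w ω) ω}

/-- `str` is an optimizer of the log-utility maximization problem for `S^w`. -/
def IsLogOptimal (F : ℝ → MeasurableSpace Ω) (P : Measure Ω) (B : ℝ → Ω → ℝ)
    (lam w a b : ℝ) (str : Strategy F (Ici 0) (Sproc B w) lam a b) : Prop :=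
  str.Admissible ∧
    eExpU P Real.log (fun ω => Vliq (Sproc B w) lam str.φ0 str.φ1 (hitT B w ω) ω) =
      logVal F P B lam w a b

/-- Dual value of the log-utility maximization problem for `S^w`. -/
def dualLogVal (F : ℝ → MeasurableSpace Ω) (P : Measure Ω) (B : ℝ → Ω → ℝ)
    (lam w y : ℝ) : EReal :=
  sInf {r : EReal | ∃ Y0 Y1 : ℝ → Ω → ℝ,
    IsDeflator F P (Ici 0) (Sproc B w) lam y Y0 Y1 ∧
      r = eExpV P Real.log fun ω => Y0 (hitT B w ω) ω}

/-- The value function `v(l, w)` of Lemma A.3. -/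
def vlw (F : ℝ → MeasurableSpace Ω) (P : Measure Ω) (B : ℝ → Ω → ℝ)
    (lam l w : ℝ) : EReal :=
  logVal F P B lam w (1 - l) l

/-- The critical leverage function `ℓ(w)`. -/
def ellF (F : ℝ → MeasurableSpace Ω) (P : Measure Ω) (B : ℝ → Ω → ℝ)
    (lam w : ℝ) : ℝ :=
  sSup {l : ℝ | l ∈ Icc 0 (1 / lam) ∧ vlw F P B lam l w = vlw F P B lam 0 w}

/-- The σ-algebra `F_σ` associated to a stopping time `σ`. -/
def stopSigma (F : ℝ → MeasurableSpace Ω) (σ : Ω → ℝ) : MeasurableSpace Ω :=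
  MeasurableSpace.generateFrom {A | ∀ t : ℝ, MeasurableSet[F t] (A ∩ {ω | σ ω ≤ t})}

/-- The natural σ-algebra generated by a process up to time `t`. -/
def natF (S : ℝ → Ω → ℝ) (t : ℝ) : MeasurableSpace Ω :=
  ⨆ s ∈ Icc (0 : ℝ) t, MeasurableSpace.comap (S s) inferInstance

/-- The `P`-augmented natural filtration of the process `S`. -/
def augF (P : Measure Ω) (S : ℝ → Ω → ℝ) (t : ℝ) : MeasurableSpace Ω :=
  natF S t ⊔ MeasurableSpace.generateFrom {A | MeasurableSet A ∧ P A = 0}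

/-- The exponential law with rate `r` on `ℝ`. -/
def expLaw (r : ℝ) : Measure ℝ :=
  MeasureTheory.volume.withDensity fun x =>
    ENNReal.ofReal (if 0 ≤ x then r * Real.exp (-(r * x)) else 0)


section Aux15

variable {P : Measure Ω} [IsProbabilityMeasure P] {τ : Ω → ℝ} {α : ℝ}


lemma integral_exp_Ioc {γ : ℝ} (hγ : γ ≠ 0) {s t : ℝ} (hst : s ≤ t) :
    ∫ x in Ioc s t, Real.exp (γ * x) = (Real.exp (γ * t) - Real.exp (γ * s)) / γ := by
  rw [← intervalIntegral.integral_of_le hst]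
  have hd : ∀ x ∈ uIcc s t, HasDerivAt (fun y => Real.exp (γ * y) / γ) (Real.exp (γ * x)) x := by
    intro x _
    have h1 : HasDerivAt (fun y : ℝ => γ * y) γ x := by
      simpa using (hasDerivAt_id x).const_mul γ
    have h2 := (h1.exp).div_const γ
    simpa [mul_div_assoc, mul_div_cancel_right₀, hγ] using h2
  rw [intervalIntegral.integral_eq_sub_of_hasDerivAt hd
    ((Real.continuous_exp.comp (continuous_const.mul continuous_id)).intervalIntegrable s t)]
  ring

lemma integral_exp_neg_Ioi' {α : ℝ} (hα : 0 < α) (a : ℝ) :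
    ∫ x in Ioi a, Real.exp (-(α * x)) = Real.exp (-(α * a)) / α := by
  have hderiv : ∀ x ∈ Ici a, HasDerivAt (fun y => -(Real.exp (-(α * y)) / α))
      (Real.exp (-(α * x))) x := by
    intro x _
    have h1 : HasDerivAt (fun y : ℝ => -(α * y)) (-α) x := by
      simpa using (hasDerivAt_neg x).const_mul α
    have h2 := ((h1.exp).div_const α).neg
    have h3 : HasDerivAt (fun y => -(Real.exp (-(α * y)) / α))
        (-(Real.exp (-(α * x)) * -α / α)) x := h2
    have he : -(Real.exp (-(α * x)) * -α / α) = Real.exp (-(α * x)) := by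
      field_simp
    rwa [he] at h3
  have hint : IntegrableOn (fun x => Real.exp (-(α * x))) (Ioi a) := by
    have := exp_neg_integrableOn_Ioi a hα
    simpa [neg_mul] using this
  have htend : Tendsto (fun y => -(Real.exp (-(α * y)) / α)) atTop (𝓝 0) := by
    have h1 : Tendsto (fun y : ℝ => -(α * y)) atTop atBot := by
      have := tendsto_id.const_mul_atTop_of_neg (neg_neg_iff_pos.2 hα)
      refine this.congr fun x => ?_
      simp [neg_mul]
    have := (Real.tendsto_exp_atBot.comp h1).div_const α
    simpa using this.neg
  have := integral_Ioi_of_hasDerivAt_of_tendsto' hderiv hint htend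
  rw [this]; ring


lemma expLaw_eq_withDensity (hα : 0 < α) :
    expLaw α = volume.withDensity
      (fun x => ((if 0 ≤ x then α * Real.exp (-(α * x)) else 0).toNNReal : ℝ≥0∞)) := rfl

lemma dens_meas (hα : 0 < α) :
    Measurable fun x => (if 0 ≤ x then α * Real.exp (-(α * x)) else 0).toNNReal := by
  apply Measurable.real_toNNReal
  exact Measurable.ite measurableSet_Ici (by fun_prop) measurable_const

lemma integral_comp_tau (hτ : Measurable τ) (hα : 0 < α) (hlaw : Measure.map τ P = expLaw α)
    (g : ℝ → ℝ) (hg : Measurable g) :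
    ∫ ω, g (τ ω) ∂P = ∫ x in Ioi (0:ℝ), α * Real.exp (-(α * x)) * g x := by
  have h1 : ∫ ω, g (τ ω) ∂P = ∫ x, g x ∂(expLaw α) := by
    rw [← hlaw, integral_map hτ.aemeasurable hg.aestronglyMeasurable]
  rw [h1, expLaw_eq_withDensity hα, integral_withDensity_eq_integral_smul (dens_meas hα) g]
  have h2 : ∀ x, (if 0 ≤ x then α * Real.exp (-(α * x)) else 0).toNNReal • g x =
      (Ici (0:ℝ)).indicator (fun x => α * Real.exp (-(α * x)) * g x) x := by
    intro x
    by_cases h : 0 ≤ x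
    · rw [if_pos h, indicator_of_mem (show x ∈ Ici (0:ℝ) from h), NNReal.smul_def,
        Real.coe_toNNReal _ (mul_nonneg hα.le (Real.exp_pos _).le)]
      rfl
    · rw [if_neg h, indicator_of_notMem (show x ∉ Ici (0:ℝ) from h)]; simp
  rw [integral_congr_ae (Eventually.of_forall h2), integral_indicator measurableSet_Ici,
    setIntegral_congr_set (Ioi_ae_eq_Ici (a := (0:ℝ))).symm]

lemma setIntegral_comp_tau (hτ : Measurable τ) (hα : 0 < α)
    (hlaw : Measure.map τ P = expLaw α) {s : ℝ} (hs : 0 ≤ s) (g : ℝ → ℝ) (hg : Measurable g) :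
    ∫ ω in {ω | s < τ ω}, g (τ ω) ∂P = ∫ x in Ioi s, α * Real.exp (-(α * x)) * g x := by
  have hset : MeasurableSet {ω | s < τ ω} := hτ measurableSet_Ioi
  rw [← integral_indicator hset]
  have h1 : ∀ ω, ({ω | s < τ ω}).indicator (fun ω => g (τ ω)) ω = ((Ioi s).indicator g) (τ ω) := by
    intro ω; by_cases h : s < τ ω <;> simp [indicator, h]
  rw [integral_congr_ae (Eventually.of_forall h1),
    integral_comp_tau hτ hα hlaw _ (hg.indicator measurableSet_Ioi)]
  have h2 : ∀ x ∈ Ioi (0:ℝ), α * Real.exp (-(α * x)) * (Ioi s).indicator g x =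
      (Ioi s).indicator (fun x => α * Real.exp (-(α * x)) * g x) x := by
    intro x _; by_cases h : x ∈ Ioi s <;> simp [indicator, h]
  rw [setIntegral_congr_fun measurableSet_Ioi h2, setIntegral_indicator measurableSet_Ioi,
    Set.inter_eq_self_of_subset_right (Ioi_subset_Ioi hs)]

lemma tau_le_zero_null (hτ : Measurable τ) (hlaw : Measure.map τ P = expLaw α) :
    P {ω | τ ω ≤ 0} = 0 := by
  have h : P {ω | τ ω ≤ 0} = Measure.map τ P (Iic 0) := by
    rw [Measure.map_apply hτ measurableSet_Iic]; rfl
  rw [h, hlaw, expLaw, withDensity_apply _ measurableSet_Iic,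
    Measure.restrict_congr_set (Iio_ae_eq_Iic (a := (0:ℝ))).symm,
    setLIntegral_congr_fun measurableSet_Iio
      (fun x (hx : x < 0) => by
        rw [if_neg (not_le.2 hx), ENNReal.ofReal_zero]),
    lintegral_zero]

lemma tau_pos_ae (hτ : Measurable τ) (hlaw : Measure.map τ P = expLaw α) :
    ∀ᵐ ω ∂P, 0 < τ ω := by
  rw [ae_iff]
  have : {ω | ¬ 0 < τ ω} = {ω | τ ω ≤ 0} := by ext ω; simp [not_lt]
  rw [this]; exact tau_le_zero_null hτ hlaw

lemma tau_eq_null (hτ : Measurable τ) (hlaw : Measure.map τ P = expLaw α) (x : ℝ) :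
    P {ω | τ ω = x} = 0 := by
  have h : P {ω | τ ω = x} = Measure.map τ P {x} := by
    rw [Measure.map_apply hτ (measurableSet_singleton x)]; rfl
  rw [h, hlaw, expLaw, withDensity_apply _ (measurableSet_singleton x),
    Measure.restrict_eq_zero.mpr (by simp), lintegral_zero_measure]

lemma key_integral (hτ : Measurable τ) (hα : 0 < α) (hlaw : Measure.map τ P = expLaw α)
    {β : ℝ} (hβ : β < α) {s t : ℝ} (hs : 0 ≤ s) (hst : s ≤ t) :
    ∫ ω in {ω | s < τ ω},
        (if τ ω ≤ t then (α - β) / α else 1) * Real.exp (β * min t (τ ω)) ∂P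
      = Real.exp ((β - α) * s) := by
  have hγ : β - α ≠ 0 := sub_ne_zero.2 (ne_of_lt hβ)
  have hg : Measurable fun x : ℝ => (if x ≤ t then (α - β) / α else 1) * Real.exp (β * min t x) := by
    exact (Measurable.ite measurableSet_Iic measurable_const measurable_const).mul
      (((measurable_const.min measurable_id).const_mul β).exp)
  have h1 : ∫ ω in {ω | s < τ ω},
      (if τ ω ≤ t then (α - β) / α else 1) * Real.exp (β * min t (τ ω)) ∂P
      = ∫ x in Ioi s, α * Real.exp (-(α * x)) *
          ((if x ≤ t then (α - β) / α else 1) * Real.exp (β * min t x)) :=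
    setIntegral_comp_tau hτ hα hlaw hs _ hg
  rw [h1, ← Ioc_union_Ioi_eq_Ioi hst]
  have e1 : EqOn (fun x => α * Real.exp (-(α * x)) *
      ((if x ≤ t then (α - β) / α else 1) * Real.exp (β * min t x)))
      (fun x => (α - β) * Real.exp ((β - α) * x)) (Ioc s t) := by
    intro x hx
    simp only
    rw [if_pos hx.2, min_eq_right hx.2, show (β - α) * x = β * x + -(α * x) by ring,
      Real.exp_add]
    field_simp
  have e2 : EqOn (fun x => α * Real.exp (-(α * x)) *
      ((if x ≤ t then (α - β) / α else 1) * Real.exp (β * min t x)))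
      (fun x => (Real.exp (β * t) * α) * Real.exp (-(α * x))) (Ioi t) := by
    intro x hx
    simp only
    rw [if_neg (not_le.2 hx), min_eq_left (le_of_lt hx)]
    ring
  have hint1 : IntegrableOn (fun x => α * Real.exp (-(α * x)) *
      ((if x ≤ t then (α - β) / α else 1) * Real.exp (β * min t x))) (Ioc s t) := by
    rw [integrableOn_congr_fun e1 measurableSet_Ioc]
    exact (continuous_const.mul
      (Real.continuous_exp.comp (continuous_const.mul continuous_id))).integrableOn_Ioc
  have hint2 : IntegrableOn (fun x => α * Real.exp (-(α * x)) *
      ((if x ≤ t then (α - β) / α else 1) * Real.exp (β * min t x))) (Ioi t) := by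
    rw [integrableOn_congr_fun e2 measurableSet_Ioi]
    have := (exp_neg_integrableOn_Ioi t hα).const_mul (Real.exp (β * t) * α)
    simp only [neg_mul] at this; exact this
  rw [setIntegral_union (Ioc_disjoint_Ioi le_rfl) measurableSet_Ioi hint1 hint2,
    setIntegral_congr_fun measurableSet_Ioc e1, setIntegral_congr_fun measurableSet_Ioi e2,
    integral_const_mul, integral_const_mul, integral_exp_Ioc hγ hst, integral_exp_neg_Ioi' hα t]
  have he : Real.exp (β * t) * α * (Real.exp (-(α * t)) / α) = Real.exp ((β - α) * t) := by
    rw [show (β - α) * t = β * t + -(α * t) by ring, Real.exp_add]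
    field_simp [hα.ne']
  rw [he]
  field_simp
  ring

lemma exp_tau_integrable (hτ : Measurable τ) (hα : 0 < α) (hlaw : Measure.map τ P = expLaw α)
    {β : ℝ} (hβ : β < α) : Integrable (fun ω => Real.exp (β * τ ω)) P := by
  have hg : Measurable fun x : ℝ => Real.exp (β * x) := by fun_prop
  refine (integrable_map_measure hg.aestronglyMeasurable hτ.aemeasurable).mp ?_
  rw [hlaw, expLaw, integrable_withDensity_iff
    (by exact (Measurable.ite measurableSet_Ici (by fun_prop) measurable_const).ennreal_ofReal)
    (Eventually.of_forall fun x => ENNReal.ofReal_lt_top)]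
  have he : (fun x => Real.exp (β * x) *
      (ENNReal.ofReal (if 0 ≤ x then α * Real.exp (-(α * x)) else 0)).toReal)
      = (Ici (0:ℝ)).indicator (fun x => α * Real.exp ((β - α) * x)) := by
    funext x
    by_cases h : 0 ≤ x
    · rw [if_pos h, indicator_of_mem (show x ∈ Ici (0:ℝ) from h),
        ENNReal.toReal_ofReal (mul_nonneg hα.le (Real.exp_pos _).le),
        show (β - α) * x = β * x + -(α * x) by ring, Real.exp_add]
      ring
    · rw [if_neg h, indicator_of_notMem (show x ∉ Ici (0:ℝ) from h)]
      simp
  rw [he, integrable_indicator_iff measurableSet_Ici,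
    integrableOn_Ici_iff_integrableOn_Ioi]
  have h2 := (exp_neg_integrableOn_Ioi 0 (show (0:ℝ) < α - β by linarith)).const_mul α
  refine (integrableOn_congr_fun (fun x _ => ?_) measurableSet_Ioi).mpr h2
  show α * Real.exp ((β - α) * x) = α * Real.exp (-(α - β) * x)
  rw [show (β - α) * x = -(α - β) * x by ring]



/-- The σ-algebra of measurable sets that are trivial on `T` modulo `P`-null sets. -/
def trivSig (P : Measure Ω) (T : Set Ω) : MeasurableSpace Ω where
  MeasurableSet' A := MeasurableSet A ∧ (P (A ∩ T) = 0 ∨ P (T \ A) = 0)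
  measurableSet_empty := ⟨MeasurableSet.empty, Or.inl (by simp)⟩
  measurableSet_compl := by
    rintro A ⟨hA, h⟩
    refine ⟨hA.compl, ?_⟩
    rcases h with h | h
    · right
      rw [show T \ Aᶜ = A ∩ T by ext x; simp [and_comm]]
      exact h
    · left
      rw [show Aᶜ ∩ T = T \ A by ext x; simp [and_comm]]
      exact h
  measurableSet_iUnion := by
    intro f hf
    refine ⟨MeasurableSet.iUnion fun n => (hf n).1, ?_⟩
    by_cases h : ∃ n, P (T \ f n) = 0
    · obtain ⟨n, hn⟩ := h
      refine Or.inr (measure_mono_null ?_ hn)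
      intro x hx
      simp only [Set.mem_diff, Set.mem_iUnion, not_exists] at hx ⊢
      exact ⟨hx.1, hx.2 n⟩
    · push_neg at h
      have h' : ∀ n, P (f n ∩ T) = 0 := fun n => ((hf n).2).resolve_right (h n)
      refine Or.inl ?_
      rw [Set.iUnion_inter]
      exact measure_iUnion_null h'


lemma S_meas (hτ : Measurable τ) (t : ℝ) :
    Measurable fun ω => Real.exp (min t (τ ω)) :=
  (measurable_const.min hτ).exp

lemma augF_le_ambient (hτ : Measurable τ) (t : ℝ) :
    augF P (fun t ω => Real.exp (min t (τ ω))) t ≤ ‹MeasurableSpace Ω› := by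
  refine sup_le (iSup₂_le fun u _ => ?_) (MeasurableSpace.generateFrom_le fun A hA => hA.1)
  exact measurable_iff_comap_le.mp (S_meas hτ u)

lemma augF_mono {s t : ℝ} (hst : s ≤ t) :
    augF P (fun t ω => Real.exp (min t (τ ω))) s ≤
      augF P (fun t ω => Real.exp (min t (τ ω))) t := by
  refine sup_le_sup_right (iSup₂_le fun u hu => ?_) _
  exact le_iSup₂ (f := fun (v : ℝ) (_ : v ∈ Icc (0:ℝ) t) =>
    MeasurableSpace.comap (fun ω => Real.exp (min v (τ ω))) inferInstance) u
    ⟨hu.1, hu.2.trans hst⟩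

lemma augF_le_trivSig (hτ : Measurable τ) (s : ℝ) :
    augF P (fun t ω => Real.exp (min t (τ ω))) s ≤ trivSig P {ω | s < τ ω} := by
  refine sup_le (iSup₂_le fun u hu => ?_) (MeasurableSpace.generateFrom_le fun A hA =>
    ⟨hA.1, Or.inl (measure_mono_null Set.inter_subset_left hA.2)⟩)
  rw [MeasurableSpace.le_def]
  rintro A ⟨B, hB, rfl⟩
  refine ⟨S_meas hτ u hB, ?_⟩
  by_cases he : Real.exp u ∈ B
  · right
    have : {ω | s < τ ω} \ ((fun ω => Real.exp (min u (τ ω))) ⁻¹' B) = ∅ := by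
      ext ω
      simp only [Set.mem_diff, Set.mem_setOf_eq, Set.mem_preimage, Set.mem_empty_iff_false,
        iff_false, not_and, not_not]
      intro hs
      rw [min_eq_left (hu.2.trans hs.le)]
      exact he
    rw [this]; simp
  · left
    have : ((fun ω => Real.exp (min u (τ ω))) ⁻¹' B) ∩ {ω | s < τ ω} = ∅ := by
      ext ω
      simp only [Set.mem_inter_iff, Set.mem_preimage, Set.mem_setOf_eq,
        Set.mem_empty_iff_false, iff_false, not_and]
      intro hmem hs
      rw [min_eq_left (hu.2.trans hs.le)] at hmem
      exact he hmem
    rw [this]; simp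

lemma min_tau_meas_augF (hτ : Measurable τ) {t : ℝ} (ht : 0 ≤ t) :
    Measurable[augF P (fun t ω => Real.exp (min t (τ ω))) t] fun ω => min t (τ ω) := by
  have hcomap : MeasurableSpace.comap (fun ω => Real.exp (min t (τ ω))) inferInstance ≤
      augF P (fun t ω => Real.exp (min t (τ ω))) t := by
    refine le_trans ?_ le_sup_left
    exact le_iSup₂ (f := fun (v : ℝ) (_ : v ∈ Icc (0:ℝ) t) =>
      MeasurableSpace.comap (fun ω => Real.exp (min v (τ ω))) inferInstance) t ⟨ht, le_rfl⟩
  have h1 : Measurable[augF P (fun t ω => Real.exp (min t (τ ω))) t]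
      fun ω => Real.exp (min t (τ ω)) := measurable_iff_comap_le.mpr hcomap
  have h2 : Measurable[augF P (fun t ω => Real.exp (min t (τ ω))) t]
      fun ω => Real.log (Real.exp (min t (τ ω))) := Real.measurable_log.comp h1
  simpa only [Real.log_exp] using h2

lemma tau_lt_meas_augF (hτ : Measurable τ) {t : ℝ} (ht : 0 ≤ t) :
    MeasurableSet[augF P (fun t ω => Real.exp (min t (τ ω))) t] {ω | τ ω < t} := by
  have : {ω | τ ω < t} = (fun ω => min t (τ ω)) ⁻¹' (Iio t) := by
    ext ω; simp [min_lt_iff]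
  rw [this]
  exact min_tau_meas_augF hτ ht measurableSet_Iio

lemma tau_le_meas_augF (hτ : Measurable τ) (hlaw : Measure.map τ P = expLaw α)
    {t : ℝ} (ht : 0 ≤ t) :
    MeasurableSet[augF P (fun t ω => Real.exp (min t (τ ω))) t] {ω | τ ω ≤ t} := by
  have h1 := tau_lt_meas_augF (P := P) hτ ht
  have h2 : MeasurableSet[augF P (fun t ω => Real.exp (min t (τ ω))) t] {ω | τ ω = t} := by
    refine (le_sup_right : _ ≤ augF P (fun t ω => Real.exp (min t (τ ω))) t) _ ?_
    exact MeasurableSpace.measurableSet_generateFrom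
      ⟨hτ (measurableSet_singleton t), tau_eq_null hτ hlaw t⟩
  have he : {ω | τ ω ≤ t} = {ω | τ ω < t} ∪ {ω | τ ω = t} := by
    ext ω; simp [le_iff_lt_or_eq]
  rw [he]
  exact h1.union h2

lemma Z_adapted (hτ : Measurable τ) (hlaw : Measure.map τ P = expLaw α)
    (c β : ℝ) {t : ℝ} (ht : 0 ≤ t) :
    Measurable[augF P (fun t ω => Real.exp (min t (τ ω))) t]
      (fun ω => (if τ ω ≤ t then c else 1) * Real.exp (β * min t (τ ω))) :=
  (Measurable.ite (tau_le_meas_augF hτ hlaw ht) measurable_const measurable_const).mul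
    (((min_tau_meas_augF hτ ht).const_mul β).exp)

lemma Z_bound (hτ : Measurable τ) (hα : 0 < α) (hlaw : Measure.map τ P = expLaw α)
    {β : ℝ} (hβ : β < α) {t : ℝ} (ht : 0 ≤ t) :
    ∀ᵐ ω ∂P, ‖(if τ ω ≤ t then (α - β) / α else 1) * Real.exp (β * min t (τ ω))‖ ≤
      max ((α - β) / α) 1 * (1 + Real.exp (β * τ ω)) := by
  filter_upwards [tau_pos_ae hτ hlaw] with ω hω
  have hc : 0 < (α - β) / α := div_pos (sub_pos.2 hβ) hα
  have hcoef : 0 < (if τ ω ≤ t then (α - β) / α else 1) := by split <;> [exact hc; exact one_pos]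
  rw [Real.norm_eq_abs, abs_of_nonneg (mul_nonneg hcoef.le (Real.exp_pos _).le)]
  have h1 : (if τ ω ≤ t then (α - β) / α else 1) ≤ max ((α - β) / α) 1 := by
    split <;> [exact le_max_left _ _; exact le_max_right _ _]
  have h2 : Real.exp (β * min t (τ ω)) ≤ 1 + Real.exp (β * τ ω) := by
    rcases le_total β 0 with hb | hb
    · have hm : 0 ≤ min t (τ ω) := le_min ht hω.le
      have : β * min t (τ ω) ≤ 0 := mul_nonpos_of_nonpos_of_nonneg hb hm
      have := Real.exp_le_one_iff.2 this
      linarith [(Real.exp_pos (β * τ ω)).le]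
    · have : β * min t (τ ω) ≤ β * τ ω := mul_le_mul_of_nonneg_left (min_le_right _ _) hb
      have := Real.exp_le_exp.2 this
      linarith
  exact mul_le_mul h1 h2 (Real.exp_pos _).le (le_trans zero_le_one (le_max_right _ _))

lemma Z_integrable (hτ : Measurable τ) (hα : 0 < α) (hlaw : Measure.map τ P = expLaw α)
    {β : ℝ} (hβ : β < α) {t : ℝ} (ht : 0 ≤ t) :
    Integrable (fun ω => (if τ ω ≤ t then (α - β) / α else 1) * Real.exp (β * min t (τ ω))) P := by
  have hD : Integrable (fun ω => max ((α - β) / α) 1 * (1 + Real.exp (β * τ ω))) P :=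
    ((integrable_const (1:ℝ)).add (exp_tau_integrable hτ hα hlaw hβ)).const_mul _
  exact hD.mono'
    ((Measurable.ite (hτ measurableSet_Iic) measurable_const measurable_const).mul
      (((measurable_const.min hτ).const_mul β).exp)).aestronglyMeasurable
    (Z_bound hτ hα hlaw hβ ht)

lemma Z_condexp (hτ : Measurable τ) (hα : 0 < α) (hlaw : Measure.map τ P = expLaw α)
    {β : ℝ} (hβ : β < α) {s t : ℝ} (hs : 0 ≤ s) (hst : s ≤ t) :
    P[(fun ω => (if τ ω ≤ t then (α - β) / α else 1) * Real.exp (β * min t (τ ω)))|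
        augF P (fun t ω => Real.exp (min t (τ ω))) s] =ᵐ[P]
      (fun ω => (if τ ω ≤ s then (α - β) / α else 1) * Real.exp (β * min s (τ ω))) := by
  have hm := augF_le_ambient (P := P) hτ s
  refine (ae_eq_condExp_of_forall_setIntegral_eq hm
    (Z_integrable hτ hα hlaw hβ (hs.trans hst))
    (fun A _ _ => (Z_integrable hτ hα hlaw hβ hs).integrableOn)
    (fun A hA _ => ?_)
    (StronglyMeasurable.aestronglyMeasurable
      ((Z_adapted hτ hlaw _ β hs).stronglyMeasurable))).symm
  set T := {ω | s < τ ω} with hT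
  have hTm : MeasurableSet T := hτ measurableSet_Ioi
  obtain ⟨hAm, hd⟩ : MeasurableSet A ∧ (P (A ∩ T) = 0 ∨ P (T \ A) = 0) :=
    augF_le_trivSig hτ s A hA
  have hsplit : ∀ u, 0 ≤ u →
      ∫ ω in A, (if τ ω ≤ u then (α - β) / α else 1) * Real.exp (β * min u (τ ω)) ∂P =
      (∫ ω in A ∩ T, (if τ ω ≤ u then (α - β) / α else 1) * Real.exp (β * min u (τ ω)) ∂P) +
      ∫ ω in A ∩ Tᶜ, (if τ ω ≤ u then (α - β) / α else 1) * Real.exp (β * min u (τ ω)) ∂P := by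
    intro u hu
    rw [← setIntegral_union
      ((disjoint_compl_right).mono inter_subset_right inter_subset_right)
      (hAm.inter hTm.compl)
      (Z_integrable hτ hα hlaw hβ hu).integrableOn
      (Z_integrable hτ hα hlaw hβ hu).integrableOn,
      Set.inter_union_compl]
  rw [hsplit s hs, hsplit t (hs.trans hst)]
  have hcompl : (∫ ω in A ∩ Tᶜ, (if τ ω ≤ s then (α - β) / α else 1) *
        Real.exp (β * min s (τ ω)) ∂P) =
      ∫ ω in A ∩ Tᶜ, (if τ ω ≤ t then (α - β) / α else 1) * Real.exp (β * min t (τ ω)) ∂P := by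
    refine setIntegral_congr_fun (hAm.inter hTm.compl) fun ω hω => ?_
    have hτω : τ ω ≤ s := not_lt.1 hω.2
    rw [if_pos hτω, if_pos (hτω.trans hst), min_eq_right hτω, min_eq_right (hτω.trans hst)]
  rcases hd with h | h
  · have hz : P.restrict (A ∩ T) = 0 := Measure.restrict_eq_zero.mpr h
    rw [hcompl, hz, integral_zero_measure, integral_zero_measure]
  · have hAT : (A ∩ T : Set Ω) =ᵐ[P] T := by
      refine MeasureTheory.ae_eq_set.2 ⟨?_, ?_⟩
      · refine measure_mono_null ?_ h
        intro x hx
        exact absurd hx.1.2 hx.2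
      · refine measure_mono_null ?_ h
        intro x hx
        exact ⟨hx.1, fun h' => hx.2 ⟨h', hx.1⟩⟩
    rw [hcompl, setIntegral_congr_set hAT, setIntegral_congr_set hAT]
    have k1 := key_integral hτ hα hlaw hβ hs le_rfl
    have k2 := key_integral hτ hα hlaw hβ hs hst
    rw [hT, k1, k2]

lemma ui_of_dom {I : Set ℝ} {f : ℝ → Ω → ℝ} {D : Ω → ℝ}
    (hD : Integrable D P) (hDm : Measurable D)
    (hfm : ∀ t ∈ I, Measurable (f t)) (hf : ∀ t ∈ I, Integrable (f t) P)
    (hbound : ∀ t ∈ I, ∀ᵐ ω ∂P, |f t ω| ≤ D ω) :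
    ∀ ε > (0 : ℝ), ∃ C : ℝ, ∀ t ∈ I, ∫ ω in {ω | C ≤ |f t ω|}, |f t ω| ∂P ≤ ε := by
  intro ε hε
  set G : Ω → ℝ := fun ω => |D ω| with hG
  have hGm : Measurable G := hDm.abs
  have hGi : Integrable G P := hD.abs
  have hGnn : ∀ ω, 0 ≤ G ω := fun ω => abs_nonneg _
  have hmeasset : ∀ n : ℕ, MeasurableSet {ω | (n : ℝ) ≤ G ω} :=
    fun n => measurableSet_le measurable_const hGm
  have htend : Tendsto (fun n : ℕ => ∫ ω, Set.indicator {ω | (n : ℝ) ≤ G ω} G ω ∂P) atTop (𝓝 0) := by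
    have h0 : (0 : ℝ) = ∫ ω, (0 : ℝ) ∂P := by simp
    rw [h0]
    refine tendsto_integral_of_dominated_convergence G
      (fun n => (hGm.indicator (hmeasset n)).aestronglyMeasurable) hGi
      (fun n => Eventually.of_forall fun ω => ?_) (Eventually.of_forall fun ω => ?_)
    · rw [Real.norm_eq_abs]
      by_cases h : ω ∈ {ω | (n : ℝ) ≤ G ω}
      · rw [Set.indicator_of_mem h, abs_of_nonneg (hGnn ω)]
      · rw [Set.indicator_of_notMem h, abs_zero]; exact hGnn ω
    · refine tendsto_const_nhds.congr' ?_
      rw [Filter.EventuallyEq, eventually_atTop]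
      refine ⟨⌈G ω⌉₊ + 1, fun n hn => ?_⟩
      have : ¬ (n : ℝ) ≤ G ω := by
        push_neg
        calc G ω ≤ (⌈G ω⌉₊ : ℝ) := Nat.le_ceil _
        _ < n := by exact_mod_cast Nat.lt_of_lt_of_le (Nat.lt_succ_self _) hn
      exact (Set.indicator_of_notMem (show ω ∉ {ω | (n:ℝ) ≤ G ω} from this) G).symm
  obtain ⟨n, hn⟩ : ∃ n : ℕ, ∫ ω, Set.indicator {ω | ((n:ℕ) : ℝ) ≤ G ω} G ω ∂P < ε := (htend.eventually (gt_mem_nhds hε)).exists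
  refine ⟨n, fun t ht => ?_⟩
  have hset : MeasurableSet {ω | (n : ℝ) ≤ |f t ω|} :=
    measurableSet_le measurable_const (hfm t ht).abs
  rw [← integral_indicator hset]
  have hle : ∀ᵐ ω ∂P, Set.indicator {ω | (n : ℝ) ≤ |f t ω|} (fun ω => |f t ω|) ω ≤ Set.indicator {ω | (n : ℝ) ≤ G ω} G ω := by
    filter_upwards [hbound t ht] with ω hb
    by_cases h : ω ∈ {ω | (n : ℝ) ≤ |f t ω|}
    · rw [Set.indicator_of_mem h]
      have hmem : ω ∈ {ω | (n : ℝ) ≤ G ω} := le_trans h.out (hb.trans (le_abs_self _))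
      rw [Set.indicator_of_mem hmem]
      exact hb.trans (le_abs_self _)
    · rw [Set.indicator_of_notMem h]
      exact Set.indicator_apply_nonneg fun _ => hGnn ω
  have hint1 : Integrable (Set.indicator {ω | (n : ℝ) ≤ |f t ω|} fun ω => |f t ω|) P :=
    (hf t ht).abs.indicator hset
  have hint2 : Integrable (Set.indicator {ω | (n : ℝ) ≤ G ω} G) P := hGi.indicator (hmeasset n)
  exact le_trans (integral_mono_ae hint1 hint2 hle) hn.le


lemma Z_stopped_mart (hτ : Measurable τ) (hα : 0 < α) (hlaw : Measure.map τ P = expLaw α)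
    {β : ℝ} (hβ : β < α) (n : ℕ) :
    MartOn (augF P fun t ω => Real.exp (min t (τ ω))) P (Ici 0)
      (stopProc (fun t ω => (if τ ω ≤ t then (α - β) / α else 1) *
        Real.exp (β * min t (τ ω))) (fun _ => (n : ℝ))) := by
  refine ⟨fun t ht => ?_, fun t ht => ?_, fun s hs t ht hst => ?_⟩
  · have h0 : (0 : ℝ) ≤ min t (n : ℝ) := le_min ht (Nat.cast_nonneg n)
    exact (Z_adapted hτ hlaw _ β h0).mono (augF_mono (min_le_left t (n : ℝ))) le_rfl
  · exact Z_integrable hτ hα hlaw hβ (le_min ht (Nat.cast_nonneg n))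
  · have hs0 : (0 : ℝ) ≤ s := hs
    show P[(fun ω => (if τ ω ≤ min t (n : ℝ) then (α - β) / α else 1) *
          Real.exp (β * min (min t (n : ℝ)) (τ ω)))|
        augF P (fun t ω => Real.exp (min t (τ ω))) s] =ᵐ[P]
      (fun ω => (if τ ω ≤ min s (n : ℝ) then (α - β) / α else 1) *
        Real.exp (β * min (min s (n : ℝ)) (τ ω)))
    rcases le_total (n : ℝ) s with h | h
    · have e : min t (n : ℝ) = min s (n : ℝ) := by
        rw [min_eq_right (h.trans hst), min_eq_right h]
      rw [e]
      have hsn : (0 : ℝ) ≤ min s (n : ℝ) := le_min hs0 (Nat.cast_nonneg n)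
      have hsm : StronglyMeasurable[augF P (fun t ω => Real.exp (min t (τ ω))) s]
          (fun ω => (if τ ω ≤ min s (n : ℝ) then (α - β) / α else 1) *
            Real.exp (β * min (min s (n : ℝ)) (τ ω))) :=
        ((Z_adapted hτ hlaw _ β hsn).mono (augF_mono (min_le_left s (n : ℝ)))
          le_rfl).stronglyMeasurable
      rw [condExp_of_stronglyMeasurable (augF_le_ambient hτ s) hsm
        (Z_integrable hτ hα hlaw hβ hsn)]
    · have e : min s (n : ℝ) = s := min_eq_left h
      rw [e]
      exact Z_condexp hτ hα hlaw hβ hs0 (le_min hst h)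

end Aux15

/-- for `τ` exponential with rate `α` and `S_t = e^{t∧τ}`, the explicit
pair `(Ẑ⁰, Ẑ¹)` consists of strictly positive uniformly integrable martingales for the
`P`-augmented natural filtration of `S`, with `Ẑ⁰_0 = 1` and
`Ẑ¹/Ẑ⁰ = (1-λ)^{1_{τ≤t}} e^{t∧τ} ∈ [(1-λ)S, S]`; hence it is a `λ`-consistent price
system for `S`. -/
theorem statement_15
    {Ω : Type*} [MeasurableSpace Ω] (P : Measure Ω) [IsProbabilityMeasure P]
    (τ : Ω → ℝ) (hτmeas : Measurable τ) (α : ℝ) (hα : 0 < α)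
    (hlaw : Measure.map τ P = expLaw α)
    (lam : ℝ) (hlam0 : 0 < lam) (hlam1 : lam < 1) :
    (∀ t : ℝ, ∀ ω,
      0 < (if τ ω ≤ t then 1 / (α * lam) else 1) *
        Real.exp ((α - 1 / lam) * min t (τ ω)) ∧
      0 < (if τ ω ≤ t then (1 - lam) / (α * lam) else 1) *
        Real.exp ((1 + α - 1 / lam) * min t (τ ω))) ∧
    (∀ᵐ ω ∂P, (if τ ω ≤ (0 : ℝ) then 1 / (α * lam) else 1) *
      Real.exp ((α - 1 / lam) * min 0 (τ ω)) = 1) ∧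
    MartOn (augF P fun t ω => Real.exp (min t (τ ω))) P (Ici 0)
      (fun t ω => (if τ ω ≤ t then 1 / (α * lam) else 1) *
        Real.exp ((α - 1 / lam) * min t (τ ω))) ∧
    MartOn (augF P fun t ω => Real.exp (min t (τ ω))) P (Ici 0)
      (fun t ω => (if τ ω ≤ t then (1 - lam) / (α * lam) else 1) *
        Real.exp ((1 + α - 1 / lam) * min t (τ ω))) ∧
    UIFamilyOn P (Ici 0)
      (fun t ω => (if τ ω ≤ t then 1 / (α * lam) else 1) *
        Real.exp ((α - 1 / lam) * min t (τ ω))) ∧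
    UIFamilyOn P (Ici 0)
      (fun t ω => (if τ ω ≤ t then (1 - lam) / (α * lam) else 1) *
        Real.exp ((1 + α - 1 / lam) * min t (τ ω))) ∧
    (∀ᵐ ω ∂P, ∀ t : ℝ, 0 ≤ t →
      ((if τ ω ≤ t then (1 - lam) / (α * lam) else 1) *
          Real.exp ((1 + α - 1 / lam) * min t (τ ω))) /
        ((if τ ω ≤ t then 1 / (α * lam) else 1) *
          Real.exp ((α - 1 / lam) * min t (τ ω))) =
        (if τ ω ≤ t then 1 - lam else 1) * Real.exp (min t (τ ω)) ∧
      (1 - lam) * Real.exp (min t (τ ω)) ≤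
        (if τ ω ≤ t then 1 - lam else 1) * Real.exp (min t (τ ω)) ∧
      (if τ ω ≤ t then 1 - lam else 1) * Real.exp (min t (τ ω)) ≤
        Real.exp (min t (τ ω))) ∧
    IsCPS (augF P fun t ω => Real.exp (min t (τ ω))) P (Ici 0)
      (fun t ω => Real.exp (min t (τ ω))) lam
      (fun t ω => (if τ ω ≤ t then 1 / (α * lam) else 1) *
        Real.exp ((α - 1 / lam) * min t (τ ω)))
      (fun t ω => (if τ ω ≤ t then (1 - lam) / (α * lam) else 1) *
        Real.exp ((1 + α - 1 / lam) * min t (τ ω))) := by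
  have hτ := hτmeas
  have hl0 : 0 < 1 / lam := by positivity
  have hβ0 : α - 1 / lam < α := by linarith
  have hβ1 : 1 + α - 1 / lam < α := by
    have h1 : 1 < 1 / lam := by rw [lt_div_iff₀ hlam0]; linarith
    linarith
  have e0 : (1 : ℝ) / (α * lam) = (α - (α - 1 / lam)) / α := by field_simp; ring
  have e1 : (1 - lam) / (α * lam) = (α - (1 + α - 1 / lam)) / α := by field_simp; ring
  simp only [e0, e1]
  have hpos : ∀ β : ℝ, β < α → ∀ (t : ℝ) (ω : Ω),
      0 < (if τ ω ≤ t then (α - β) / α else 1) * Real.exp (β * min t (τ ω)) := by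
    intro β hβ t ω
    have hc : 0 < (α - β) / α := div_pos (by linarith) hα
    have hco : 0 < (if τ ω ≤ t then (α - β) / α else 1) := by
      split
      · exact hc
      · exact one_pos
    exact mul_pos hco (Real.exp_pos _)
  have hinit : ∀ᵐ ω ∂P, (if τ ω ≤ (0 : ℝ) then (α - (α - 1 / lam)) / α else 1) *
      Real.exp ((α - 1 / lam) * min 0 (τ ω)) = 1 := by
    filter_upwards [tau_pos_ae hτ hlaw] with ω h
    rw [if_neg (not_le.2 h), min_eq_left h.le, mul_zero, Real.exp_zero, one_mul]
  have hmart : ∀ β : ℝ, β < α →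
      MartOn (augF P fun t ω => Real.exp (min t (τ ω))) P (Ici 0)
        (fun t ω => (if τ ω ≤ t then (α - β) / α else 1) * Real.exp (β * min t (τ ω))) :=
    fun β hβ => ⟨fun t ht => Z_adapted hτ hlaw _ β ht,
      fun t ht => Z_integrable hτ hα hlaw hβ ht,
      fun s hs t ht hst => Z_condexp hτ hα hlaw hβ hs hst⟩
  have hui : ∀ β : ℝ, β < α →
      UIFamilyOn P (Ici 0)
        (fun t ω => (if τ ω ≤ t then (α - β) / α else 1) * Real.exp (β * min t (τ ω))) := by
    intro β hβ
    refine ui_of_dom (D := fun ω => max ((α - β) / α) 1 * (1 + Real.exp (β * τ ω)))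
      (((integrable_const (1 : ℝ)).add (exp_tau_integrable hτ hα hlaw hβ)).const_mul _)
      ((measurable_const.add ((hτ.const_mul β).exp)).const_mul _)
      (fun t ht => (Measurable.ite (hτ measurableSet_Iic) measurable_const
        measurable_const).mul (((measurable_const.min hτ).const_mul β).exp))
      (fun t ht => Z_integrable hτ hα hlaw hβ ht)
      (fun t ht => ?_)
    have := Z_bound hτ hα hlaw hβ (ht : (0 : ℝ) ≤ t)
    simpa [Real.norm_eq_abs] using this
  have hratio : ∀ (t : ℝ) (ω : Ω),
      ((if τ ω ≤ t then (α - (1 + α - 1 / lam)) / α else 1) *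
          Real.exp ((1 + α - 1 / lam) * min t (τ ω))) /
        ((if τ ω ≤ t then (α - (α - 1 / lam)) / α else 1) *
          Real.exp ((α - 1 / lam) * min t (τ ω))) =
        (if τ ω ≤ t then 1 - lam else 1) * Real.exp (min t (τ ω)) := by
    intro t ω
    rw [div_eq_iff (hpos _ hβ0 t ω).ne']
    rw [show (1 + α - 1 / lam) * min t (τ ω) =
      min t (τ ω) + (α - 1 / lam) * min t (τ ω) by ring, Real.exp_add]
    split_ifs with h
    · have hcc : (α - (1 + α - 1 / lam)) / α = (1 - lam) * ((α - (α - 1 / lam)) / α) := by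
        field_simp
        ring
      rw [hcc]; ring
    · ring
  have hlow : ∀ (t : ℝ) (ω : Ω), (1 - lam) * Real.exp (min t (τ ω)) ≤
      (if τ ω ≤ t then 1 - lam else 1) * Real.exp (min t (τ ω)) := by
    intro t ω
    split_ifs with h
    · exact le_refl _
    · exact mul_le_mul_of_nonneg_right (by linarith) (Real.exp_pos _).le
  have hhigh : ∀ (t : ℝ) (ω : Ω),
      (if τ ω ≤ t then 1 - lam else 1) * Real.exp (min t (τ ω)) ≤ Real.exp (min t (τ ω)) := by
    intro t ω
    split_ifs with h
    · calc (1 - lam) * Real.exp (min t (τ ω)) ≤ 1 * Real.exp (min t (τ ω)) :=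
        mul_le_mul_of_nonneg_right (by linarith) (Real.exp_pos _).le
      _ = Real.exp (min t (τ ω)) := one_mul _
    · exact (one_mul _).le
  have hlocmart : LocMartOn (augF P fun t ω => Real.exp (min t (τ ω))) P (Ici 0)
      (fun t ω => (if τ ω ≤ t then (α - (1 + α - 1 / lam)) / α else 1) *
        Real.exp ((1 + α - 1 / lam) * min t (τ ω))) := by
    refine ⟨fun n _ => (n : ℝ), ⟨fun n t => ?_, fun ω a b hab => Nat.cast_le.2 hab,
      fun ω => tendsto_natCast_atTop_atTop⟩, fun n => Z_stopped_mart hτ hα hlaw hβ1 n⟩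
    by_cases h : (n : ℝ) ≤ t
    · have he : {ω : Ω | (n : ℝ) ≤ t} = Set.univ := eq_univ_of_forall fun ω => h
      rw [he]
      simpa using (MeasurableSpace.measurableSet_empty
        (augF P (fun t ω => Real.exp (min t (τ ω))) t)).compl
    · have he : {ω : Ω | (n : ℝ) ≤ t} = ∅ := eq_empty_iff_forall_notMem.2 fun ω hω => h hω
      rw [he]; exact MeasurableSpace.measurableSet_empty _
  refine ⟨fun t ω => ⟨hpos _ hβ0 t ω, hpos _ hβ1 t ω⟩, hinit, hmart _ hβ0, hmart _ hβ1,
    hui _ hβ0, hui _ hβ1, Eventually.of_forall fun ω t ht =>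
      ⟨hratio t ω, hlow t ω, hhigh t ω⟩, ?_⟩
  exact ⟨fun t ht => Eventually.of_forall fun ω => hpos _ hβ0 t ω,
    fun t ht => Eventually.of_forall fun ω => hpos _ hβ1 t ω,
    hinit, hmart _ hβ0, hlocmart,
    fun t ht => Eventually.of_forall fun ω => by
      rw [hratio t ω]
      exact ⟨hlow t ω, hhigh t ω⟩⟩


end CSY
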